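/- Let G be a weighted group and (H₁, H₂) a regular pair of subgroups. Then for any h₀ ∈ G, the pair (H₁, h₀H₂h₀⁻¹) is also regular, and the quotient graph H₁\P̂(G)/(h₀H₂h₀⁻¹) is isomorphic (in the category of weighted complete directed graphs) to H₁\P̂(G)/H₂, via the map HxH₂ ↦ H(xh₀⁻¹)(h₀H₂h₀⁻¹). -/
import Mathlib


open scoped Classical
open Finset

noncomputable section

/-- The generator of a weighted complete directed graph `P = (S, C)`:
`L^P f (x) = ∑ y, C x y * (f y - f x)`. -/
def gen {S : Type*} [Fintype S] (C : S → S → ℝ) (f : S → ℝ) (x : S) : ℝ :=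
  ∑ y, C x y * (f y - f x)

/-- Minus the generator, as a linear endomorphism of `S → ℝ`. -/
def negGen {S : Type*} [Fintype S] (C : S → S → ℝ) : Module.End ℝ (S → ℝ) where
  toFun f := fun x => -∑ y, C x y * (f y - f x)
  map_add' f g := by
    funext x
    simp only [Pi.add_apply]
    rw [← neg_add, ← Finset.sum_add_distrib]
    congr 1
    exact Finset.sum_congr rfl fun y _ => by ring
  map_smul' c f := by
    funext x
    simp only [Pi.smul_apply, smul_eq_mul, RingHom.id_apply]
    rw [mul_neg, Finset.mul_sum]
    congr 1
    exact Finset.sum_congr rfl fun y _ => by ring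

/-- The spectral gap: the smallest nonzero eigenvalue of `-L^P`
(the second smallest eigenvalue, since `0` is always an eigenvalue). -/
def spectralGap {S : Type*} [Fintype S] (C : S → S → ℝ) : ℝ :=
  sInf {lam : ℝ | lam ≠ 0 ∧ Module.End.HasEigenvalue (negGen C) lam}

/-- Irreducibility: any two vertices are joined by a path of nonzero-weight edges. -/
def GraphIrreducible {S : Type*} (C : S → S → ℝ) : Prop :=
  ∀ x y : S, Relation.ReflTransGen (fun a b => C a b ≠ 0) x y

/-- Reversibility with respect to `μ`. -/
def GraphReversible {S : Type*} (C : S → S → ℝ) (μ : S → ℝ) : Prop :=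
  ∀ x y : S, C y x * μ x = C x y * μ y

/-- `φ` is a morphism of weighted complete directed graphs:
it intertwines the generators. -/
def IsMorphism {S₁ S₂ : Type*} [Fintype S₁] [Fintype S₂]
    (C₁ : S₁ → S₁ → ℝ) (C₂ : S₂ → S₂ → ℝ) (φ : S₁ → S₂) : Prop :=
  ∀ (f : S₂ → ℝ) (x : S₁), gen C₁ (f ∘ φ) x = gen C₂ f (φ x)

/-- The weight-sum characterization of morphisms of weighted complete directed graphs:
`C₂ (φ x) y = ∑ (y' ∈ φ⁻¹ y), C₁ x y'` whenever `φ x ≠ y`. -/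
def IsMorphismW {S₁ S₂ : Type*} [Fintype S₁]
    (C₁ : S₁ → S₁ → ℝ) (C₂ : S₂ → S₂ → ℝ) (φ : S₁ → S₂) : Prop :=
  ∀ (x : S₁) (y : S₂), φ x ≠ y →
    C₂ (φ x) y = ∑ y' ∈ Finset.univ.filter (fun y' => φ y' = y), C₁ x y'

/-- A weighted group `(G, C)` is irreducible. -/
def GroupIrreducible {G : Type*} [Group G] (C : G → ℝ) : Prop :=
  ∀ x y : G, Relation.ReflTransGen (fun a b => C (b * a⁻¹) ≠ 0) x y

/-- A weighted group `(G, C)` is reversible with respect to `μ`. -/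
def GroupReversible {G : Type*} [Group G] (C : G → ℝ) (μ : G → ℝ) : Prop :=
  ∀ g h : G, C h * μ g = C h⁻¹ * μ (h * g)

/-- The weight of the Cayley-type graph `P̂(G)` : `Ĉ(x, y) = C_G (y * x⁻¹)`. -/
def hatC {G : Type*} [Group G] (C : G → ℝ) : G → G → ℝ := fun x y => C (y * x⁻¹)

/-- `dRel H H' x y` iff `y ∈ H * x * H'`. -/
def dRel {G : Type*} [Group G] (H H' : Subgroup G) (x y : G) : Prop :=
  ∃ h ∈ H, ∃ h' ∈ H', y = h * x * h'

theorem dRel_equivalence {G : Type*} [Group G] (H H' : Subgroup G) :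
    Equivalence (dRel H H') where
  refl x := ⟨1, H.one_mem, 1, H'.one_mem, by simp⟩
  symm := by
    rintro x y ⟨h, hh, h', hh', rfl⟩
    exact ⟨h⁻¹, H.inv_mem hh, h'⁻¹, H'.inv_mem hh', by simp [mul_assoc]⟩
  trans := by
    rintro x y z ⟨h, hh, h', hh', rfl⟩ ⟨g, hg, g', hg', rfl⟩
    exact ⟨g * h, H.mul_mem hg hh, h' * g', H'.mul_mem hh' hg', by simp [mul_assoc]⟩

/-- The setoid of double cosets `H\G/H'`. -/
def dSetoid {G : Type*} [Group G] (H H' : Subgroup G) : Setoid G :=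
  ⟨dRel H H', dRel_equivalence H H'⟩

/-- The set of double cosets `H\G/H'`. -/
abbrev DQuot {G : Type*} [Group G] (H H' : Subgroup G) : Type _ := Quotient (dSetoid H H')

/-- The double coset `HxH'` as an element of `H\G/H'`. -/
def dmk {G : Type*} [Group G] (H H' : Subgroup G) (x : G) : DQuot H H' :=
  Quotient.mk (dSetoid H H') x

noncomputable instance {G : Type*} [Group G] [Fintype G] (H H' : Subgroup G) :
    Fintype (DQuot H H') :=
  @Quotient.fintype _ _ (dSetoid H H') (Classical.decRel _)

/-- The double coset `HyH'` as a finset. -/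
def dFinset {G : Type*} [Group G] [Fintype G] (H H' : Subgroup G) (y : G) : Finset G :=
  Finset.univ.filter (fun z => dRel H H' y z)

/-- The pair of subgroups `(H, H')` is regular for the weight `C`. -/
def IsRegularPair {G : Type*} [Group G] [Fintype G] (C : G → ℝ) (H H' : Subgroup G) : Prop :=
  ∀ x y : G, dFinset H H' x ≠ dFinset H H' y → ∀ h ∈ H,
    ∑ y' ∈ dFinset H H' y, C (y' * x⁻¹) = ∑ y' ∈ dFinset H H' y, C (y' * x⁻¹ * h⁻¹)

/-- The weight of the quotient graph `H\P̂(G)/H'` :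
`C̄([x], [y]) = ∑ (y' ∈ HyH'), C_G (y' * x⁻¹)` for `[x] ≠ [y]`, and `0` on the diagonal. -/
def qC {G : Type*} [Group G] [Fintype G] (C : G → ℝ) (H H' : Subgroup G) :
    DQuot H H' → DQuot H H' → ℝ :=
  fun q q' => if q = q' then 0
    else ∑ z ∈ Finset.univ.filter (fun z => dmk H H' z = q'), C (z * (Quotient.out q)⁻¹)

section Aux

variable {G : Type*} [Group G] [Fintype G]

lemma dmk_eq_iff (H H' : Subgroup G) (x y : G) :
    dmk H H' x = dmk H H' y ↔ dRel H H' x y :=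
  ⟨fun h => Quotient.exact h, fun h => Quotient.sound h⟩

lemma mem_dFinset (H H' : Subgroup G) (x z : G) :
    z ∈ dFinset H H' x ↔ dRel H H' x z := by
  simp [dFinset]

lemma dmk_out (H H' : Subgroup G) (q : DQuot H H') :
    dmk H H' (Quotient.out q) = q := Quotient.out_eq q

lemma dFinset_eq_iff (H H' : Subgroup G) (x y : G) :
    dFinset H H' x = dFinset H H' y ↔ dRel H H' x y := by
  constructor
  · intro h
    have : y ∈ dFinset H H' x := by
      rw [h, mem_dFinset]; exact (dRel_equivalence H H').refl y
    exact (mem_dFinset H H' x y).mp this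
  · intro h
    ext z
    rw [mem_dFinset, mem_dFinset]
    exact ⟨fun hz => (dRel_equivalence H H').trans ((dRel_equivalence H H').symm h) hz,
      fun hz => (dRel_equivalence H H').trans h hz⟩

lemma filter_dmk_eq (H H' : Subgroup G) (y : G) :
    Finset.univ.filter (fun z => dmk H H' z = dmk H H' y) = dFinset H H' y := by
  ext z
  simp only [Finset.mem_filter, Finset.mem_univ, true_and, mem_dFinset, dmk_eq_iff]
  exact ⟨fun h => (dRel_equivalence H H').symm h, fun h => (dRel_equivalence H H').symm h⟩

lemma dRel_conj_iff (H₁ H₂ : Subgroup G) (h₀ x y : G) :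
    dRel H₁ (Subgroup.map (MulAut.conj h₀).toMonoidHom H₂) x y ↔
      dRel H₁ H₂ (x * h₀) (y * h₀) := by
  constructor
  · rintro ⟨h, hh, k, hk, rfl⟩
    obtain ⟨m, hm, rfl⟩ := hk
    refine ⟨h, hh, m, hm, ?_⟩
    simp only [MulEquiv.toMonoidHom_eq_coe, MonoidHom.coe_coe, MulAut.conj_apply]
    group
  · rintro ⟨h, hh, m, hm, hy⟩
    refine ⟨h, hh, h₀ * m * h₀⁻¹, ⟨m, hm, by simp [MulAut.conj_apply]⟩, ?_⟩
    have hy' : y = h * (x * h₀) * m * h₀⁻¹ := eq_mul_inv_of_mul_eq hy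
    rw [hy']; group

lemma sum_dFinset_conj (H₁ H₂ : Subgroup G) (h₀ y : G) (f : G → ℝ) :
    ∑ z ∈ dFinset H₁ (Subgroup.map (MulAut.conj h₀).toMonoidHom H₂) (y * h₀⁻¹), f z =
      ∑ w ∈ dFinset H₁ H₂ y, f (w * h₀⁻¹) := by
  refine Finset.sum_nbij' (fun z => z * h₀) (fun w => w * h₀⁻¹) ?_ ?_ ?_ ?_ ?_
  · intro z hz
    rw [mem_dFinset] at hz ⊢
    rw [dRel_conj_iff] at hz
    simpa using hz
  · intro w hw
    rw [mem_dFinset] at hw ⊢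
    rw [dRel_conj_iff]
    simpa using hw
  · intro z _; simp
  · intro w _; simp
  · intro z _; simp

/-- Translating an element of the double coset by `h' ∈ H'` on the right
permutes the double coset. -/
lemma sum_dFinset_right (H H' : Subgroup G) (y : G) {h' : G} (hh' : h' ∈ H') (f : G → ℝ) :
    ∑ z ∈ dFinset H H' y, f z = ∑ z ∈ dFinset H H' y, f (z * h') := by
  refine Finset.sum_nbij' (fun z => z * h'⁻¹) (fun z => z * h') ?_ ?_ ?_ ?_ ?_
  · rintro z hz
    rw [mem_dFinset] at hz ⊢
    obtain ⟨h, hh, k, hk, rfl⟩ := hz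
    exact ⟨h, hh, k * h'⁻¹, H'.mul_mem hk (H'.inv_mem hh'), by group⟩
  · rintro z hz
    rw [mem_dFinset] at hz ⊢
    obtain ⟨h, hh, k, hk, rfl⟩ := hz
    exact ⟨h, hh, k * h', H'.mul_mem hk hh', by group⟩
  · intro z _; simp
  · intro z _; simp
  · intro z _; simp

/-- Under regularity, the double-coset weight sum is independent of the choice of
representative for the source. -/
lemma sum_rep_invariant {C : G → ℝ} {H H' : Subgroup G} (hreg : IsRegularPair C H H')
    {x₁ x₂ y : G} (hx : dRel H H' x₁ x₂) (hxy : dmk H H' x₁ ≠ dmk H H' y) :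
    ∑ z ∈ dFinset H H' y, C (z * x₁⁻¹) = ∑ z ∈ dFinset H H' y, C (z * x₂⁻¹) := by
  obtain ⟨h, hh, h', hh', rfl⟩ := hx
  have hne : dFinset H H' x₁ ≠ dFinset H H' y := by
    rw [Ne, dFinset_eq_iff, ← dmk_eq_iff]; exact hxy
  have step1 : ∑ z ∈ dFinset H H' y, C (z * (h * x₁ * h')⁻¹) =
      ∑ z ∈ dFinset H H' y, C (z * x₁⁻¹ * h⁻¹) := by
    rw [sum_dFinset_right H H' y hh' (fun z => C (z * (h * x₁ * h')⁻¹))]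
    refine Finset.sum_congr rfl fun z _ => ?_
    congr 1; group
  rw [step1, ← hreg x₁ y hne h hh]

end Aux

theorem stmt_14 {G : Type*} [Group G] [Fintype G] (C : G → ℝ)
    (hC : ∀ g, 0 ≤ C g) (hC1 : C 1 = 0)
    (H₁ H₂ : Subgroup G) (hreg : IsRegularPair C H₁ H₂) (h₀ : G) :
    IsRegularPair C H₁ (Subgroup.map (MulAut.conj h₀).toMonoidHom H₂) ∧
    ∃ ψ : DQuot H₁ H₂ → DQuot H₁ (Subgroup.map (MulAut.conj h₀).toMonoidHom H₂),
      (∀ x : G, ψ (dmk H₁ H₂ x) =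
        dmk H₁ (Subgroup.map (MulAut.conj h₀).toMonoidHom H₂) (x * h₀⁻¹)) ∧
      Function.Bijective ψ ∧
      ∀ q q', q ≠ q' →
        qC C H₁ (Subgroup.map (MulAut.conj h₀).toMonoidHom H₂) (ψ q) (ψ q') =
          qC C H₁ H₂ q q' := by
  set H₂' := Subgroup.map (MulAut.conj h₀).toMonoidHom H₂ with hH₂'
  -- Part 1: regularity
  have key : ∀ (y g : G), ∑ z ∈ dFinset H₁ H₂' y, C (z * g) =
      ∑ w ∈ dFinset H₁ H₂ (y * h₀), C (w * (h₀⁻¹ * g)) := by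
    intro y g
    have := sum_dFinset_conj H₁ H₂ h₀ (y * h₀) (fun z => C (z * g))
    simp only [mul_inv_cancel_right] at this
    rw [this]
    exact Finset.sum_congr rfl fun w _ => by rw [mul_assoc]
  have reg' : IsRegularPair C H₁ H₂' := by
    intro x y hne h hh
    have hne' : dFinset H₁ H₂ (x * h₀) ≠ dFinset H₁ H₂ (y * h₀) := by
      rw [Ne, dFinset_eq_iff] at hne ⊢
      rw [dRel_conj_iff] at hne
      exact hne
    have h1 : ∑ y' ∈ dFinset H₁ H₂' y, C (y' * x⁻¹) =
        ∑ w ∈ dFinset H₁ H₂ (y * h₀), C (w * (x * h₀)⁻¹) := by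
      rw [key y x⁻¹]
      exact Finset.sum_congr rfl fun w _ => by congr 1; group
    have h2 : ∑ y' ∈ dFinset H₁ H₂' y, C (y' * x⁻¹ * h⁻¹) =
        ∑ w ∈ dFinset H₁ H₂ (y * h₀), C (w * (x * h₀)⁻¹ * h⁻¹) := by
      have := key y (x⁻¹ * h⁻¹)
      simp only [← mul_assoc] at this
      rw [this]
      exact Finset.sum_congr rfl fun w _ => by congr 1; group
    rw [h1, h2]
    exact hreg (x * h₀) (y * h₀) hne' h hh
  refine ⟨reg', ?_⟩
  -- Part 2: the map ψ
  have hresp : ∀ a b : G, dRel H₁ H₂ a b →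
      dmk H₁ H₂' (a * h₀⁻¹) = dmk H₁ H₂' (b * h₀⁻¹) := by
    intro a b hab
    rw [dmk_eq_iff, dRel_conj_iff]
    simpa using hab
  let ψ : DQuot H₁ H₂ → DQuot H₁ H₂' :=
    Quotient.lift (fun x => dmk H₁ H₂' (x * h₀⁻¹)) hresp
  have hψ : ∀ x : G, ψ (dmk H₁ H₂ x) = dmk H₁ H₂' (x * h₀⁻¹) := fun x => rfl
  have hresp' : ∀ a b : G, dRel H₁ H₂' a b →
      dmk H₁ H₂ (a * h₀) = dmk H₁ H₂ (b * h₀) := by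
    intro a b hab
    rw [dmk_eq_iff]
    rw [dRel_conj_iff] at hab
    exact hab
  let ψ' : DQuot H₁ H₂' → DQuot H₁ H₂ :=
    Quotient.lift (fun x => dmk H₁ H₂ (x * h₀)) hresp'
  have hleft : Function.LeftInverse ψ' ψ := by
    intro q
    induction q using Quotient.inductionOn with
    | h x =>
      show dmk H₁ H₂ (x * h₀⁻¹ * h₀) = dmk H₁ H₂ x
      rw [inv_mul_cancel_right]
  have hright : Function.RightInverse ψ' ψ := by
    intro q
    induction q using Quotient.inductionOn with
    | h x =>
      show dmk H₁ H₂' (x * h₀ * h₀⁻¹) = dmk H₁ H₂' x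
      rw [mul_inv_cancel_right]
  have hbij : Function.Bijective ψ :=
    Function.bijective_iff_has_inverse.mpr ⟨ψ', hleft, hright⟩
  refine ⟨ψ, hψ, hbij, ?_⟩
  -- Part 3: ψ preserves the quotient weights
  intro q q' hneq
  have hneψ : ψ q ≠ ψ q' := fun h => hneq (hbij.1 h)
  simp only [qC, if_neg hneq, if_neg hneψ]
  set x := Quotient.out q with hx
  set y := Quotient.out q' with hy
  set a := Quotient.out (ψ q) with ha
  have hq : dmk H₁ H₂ x = q := dmk_out _ _ q
  have hq' : dmk H₁ H₂ y = q' := dmk_out _ _ q'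
  have haq : dmk H₁ H₂' a = ψ q := dmk_out _ _ (ψ q)
  have hψq' : ψ q' = dmk H₁ H₂' (y * h₀⁻¹) := by rw [← hq', hψ]
  have e1 : Finset.univ.filter (fun z => dmk H₁ H₂' z = ψ q') =
      dFinset H₁ H₂' (y * h₀⁻¹) := by
    rw [hψq']
    exact filter_dmk_eq _ _ _
  have e2 : Finset.univ.filter (fun z => dmk H₁ H₂ z = q') = dFinset H₁ H₂ y := by
    rw [← hq']
    exact filter_dmk_eq _ _ _
  rw [e1, e2]
  have step : ∑ z ∈ dFinset H₁ H₂' (y * h₀⁻¹), C (z * a⁻¹) =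
      ∑ w ∈ dFinset H₁ H₂ y, C (w * (a * h₀)⁻¹) := by
    rw [sum_dFinset_conj H₁ H₂ h₀ y (fun z => C (z * a⁻¹))]
    exact Finset.sum_congr rfl fun w _ => by congr 1; group
  rw [step]
  -- a * h₀ is in the same double coset as x
  have hrel : dRel H₁ H₂ (a * h₀) x := by
    have : dmk H₁ H₂' a = dmk H₁ H₂' (x * h₀⁻¹) := by rw [haq, ← hq, hψ]
    rw [dmk_eq_iff, dRel_conj_iff] at this
    simpa using this
  have hmk : dmk H₁ H₂ (a * h₀) = q := by
    rw [(dmk_eq_iff _ _ _ _).mpr hrel, hq]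
  exact sum_rep_invariant hreg hrel (by rw [hmk, hq']; exact hneq)
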